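/- arXiv:nlin/0403001 — 3 statements merged into one kernel-verified Lean document; each statement's English description precedes it below -/
import Mathlib

section
/- If (q, r) solves the ∂NLS system q_t = (1/2)q_xx - 2q²r_x - 4q³r², r_t = -(1/2)r_xx - 2r²q_x + 4r³q², then the pair (q, r̂) with r̂ = -(1/2)r_x - q r² solves the coupled NLS system q_t = (1/2)q_xx + 4q² r̂, r̂_t = -(1/2)r̂_xx - 4 q r̂². -/
noncomputable def pdx (f : ℝ → ℝ → ℂ) (x t : ℝ) : ℂ := deriv (fun u => f u t) x
noncomputable def pdt (f : ℝ → ℝ → ℂ) (x t : ℝ) : ℂ := deriv (fun u => f x u) t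

lemma hasX (f : ℝ → ℝ → ℂ) (hf : ContDiff ℝ (⊤ : ℕ∞) fun p : ℝ × ℝ => f p.1 p.2) (x t : ℝ) :
    HasDerivAt (fun u => f u t) (pdx f x t) x := by
  have h : DifferentiableAt ℝ (fun u => f u t) x :=
    ((hf.differentiable (by simp)).comp (differentiable_id.prodMk (differentiable_const t))) x
  exact h.hasDerivAt

lemma hasT (f : ℝ → ℝ → ℂ) (hf : ContDiff ℝ (⊤ : ℕ∞) fun p : ℝ × ℝ => f p.1 p.2) (x t : ℝ) :
    HasDerivAt (fun u => f x u) (pdt f x t) t := by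
  have h : DifferentiableAt ℝ (fun u => f x u) t :=
    ((hf.differentiable (by simp)).comp ((differentiable_const x).prodMk differentiable_id)) t
  exact h.hasDerivAt

lemma pdx_fd (f : ℝ → ℝ → ℂ) (hf : ContDiff ℝ (⊤ : ℕ∞) fun p : ℝ × ℝ => f p.1 p.2) (x t : ℝ) :
    pdx f x t = fderiv ℝ (fun p : ℝ × ℝ => f p.1 p.2) (x, t) ((1 : ℝ), (0 : ℝ)) := by
  have h1 : HasDerivAt (fun u : ℝ => ((u, t) : ℝ × ℝ)) (1, 0) x :=
    HasDerivAt.prodMk (hasDerivAt_id x) (hasDerivAt_const x t)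
  have h2 : HasDerivAt (fun u => f u t)
      (fderiv ℝ (fun p : ℝ × ℝ => f p.1 p.2) (x, t) ((1 : ℝ), (0 : ℝ))) x :=
    (((hf.differentiable (by simp)) (x, t)).hasFDerivAt).comp_hasDerivAt (l := fun p : ℝ × ℝ => f p.1 p.2) x h1
  rw [pdx]
  exact h2.deriv

lemma pdt_fd (f : ℝ → ℝ → ℂ) (hf : ContDiff ℝ (⊤ : ℕ∞) fun p : ℝ × ℝ => f p.1 p.2) (x t : ℝ) :
    pdt f x t = fderiv ℝ (fun p : ℝ × ℝ => f p.1 p.2) (x, t) ((0 : ℝ), (1 : ℝ)) := by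
  have h1 : HasDerivAt (fun u : ℝ => ((x, u) : ℝ × ℝ)) (0, 1) t :=
    HasDerivAt.prodMk (hasDerivAt_const t x) (hasDerivAt_id t)
  have h2 : HasDerivAt (fun u => f x u)
      (fderiv ℝ (fun p : ℝ × ℝ => f p.1 p.2) (x, t) ((0 : ℝ), (1 : ℝ))) t :=
    (((hf.differentiable (by simp)) (x, t)).hasFDerivAt).comp_hasDerivAt (l := fun p : ℝ × ℝ => f p.1 p.2) t h1
  rw [pdt]
  exact h2.deriv

lemma pdx_cd (f : ℝ → ℝ → ℂ) (hf : ContDiff ℝ (⊤ : ℕ∞) fun p : ℝ × ℝ => f p.1 p.2) :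
    ContDiff ℝ (⊤ : ℕ∞) fun p : ℝ × ℝ => pdx f p.1 p.2 := by
  have e : (fun p : ℝ × ℝ => pdx f p.1 p.2)
      = fun p => fderiv ℝ (fun p : ℝ × ℝ => f p.1 p.2) p ((1 : ℝ), (0 : ℝ)) := by
    funext p; exact pdx_fd f hf p.1 p.2
  rw [e]
  exact (hf.fderiv_right (by simp)).clm_apply contDiff_const

lemma pdt_cd (f : ℝ → ℝ → ℂ) (hf : ContDiff ℝ (⊤ : ℕ∞) fun p : ℝ × ℝ => f p.1 p.2) :
    ContDiff ℝ (⊤ : ℕ∞) fun p : ℝ × ℝ => pdt f p.1 p.2 := by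
  have e : (fun p : ℝ × ℝ => pdt f p.1 p.2)
      = fun p => fderiv ℝ (fun p : ℝ × ℝ => f p.1 p.2) p ((0 : ℝ), (1 : ℝ)) := by
    funext p; exact pdt_fd f hf p.1 p.2
  rw [e]
  exact (hf.fderiv_right (by simp)).clm_apply contDiff_const

lemma clairaut (f : ℝ → ℝ → ℂ) (hf : ContDiff ℝ (⊤ : ℕ∞) fun p : ℝ × ℝ => f p.1 p.2) (x t : ℝ) :
    pdt (pdx f) x t = pdx (pdt f) x t := by
  set F : ℝ × ℝ → ℂ := fun p => f p.1 p.2 with hF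
  have hd : ∀ y, HasFDerivAt F (fderiv ℝ F y) y := fun y =>
    ((hf.differentiable (by simp)) y).hasFDerivAt
  have hd2 : HasFDerivAt (fderiv ℝ F) (fderiv ℝ (fderiv ℝ F) (x, t)) (x, t) :=
    (((hf.fderiv_right (m := (⊤ : ℕ∞)) (by simp)).differentiable (by simp)) (x, t)).hasFDerivAt
  have symm := second_derivative_symmetric hd hd2
  have e1 : (fun p : ℝ × ℝ => pdx f p.1 p.2) = fun p => fderiv ℝ F p ((1 : ℝ), (0 : ℝ)) := by
    funext p; exact pdx_fd f hf p.1 p.2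
  have e2 : (fun p : ℝ × ℝ => pdt f p.1 p.2) = fun p => fderiv ℝ F p ((0 : ℝ), (1 : ℝ)) := by
    funext p; exact pdt_fd f hf p.1 p.2
  have hx1 : HasFDerivAt (fun p : ℝ × ℝ => fderiv ℝ F p ((1 : ℝ), (0 : ℝ)))
      ((fderiv ℝ (fderiv ℝ F) (x, t)).flip ((1 : ℝ), (0 : ℝ))) (x, t) := by
    have := hd2.clm_apply (hasFDerivAt_const ((1 : ℝ), (0 : ℝ)) ((x, t) : ℝ × ℝ))
    simpa using this
  have hx2 : HasFDerivAt (fun p : ℝ × ℝ => fderiv ℝ F p ((0 : ℝ), (1 : ℝ)))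
      ((fderiv ℝ (fderiv ℝ F) (x, t)).flip ((0 : ℝ), (1 : ℝ))) (x, t) := by
    have := hd2.clm_apply (hasFDerivAt_const ((0 : ℝ), (1 : ℝ)) ((x, t) : ℝ × ℝ))
    simpa using this
  have l1 : pdt (pdx f) x t = fderiv ℝ (fderiv ℝ F) (x, t) ((0 : ℝ), (1 : ℝ)) ((1 : ℝ), (0 : ℝ)) := by
    rw [pdt_fd (pdx f) (pdx_cd f hf) x t]
    rw [show (fun p : ℝ × ℝ => pdx f p.1 p.2) = fun p => fderiv ℝ F p ((1 : ℝ), (0 : ℝ)) from e1]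
    rw [hx1.fderiv]
    rfl
  have l2 : pdx (pdt f) x t = fderiv ℝ (fderiv ℝ F) (x, t) ((1 : ℝ), (0 : ℝ)) ((0 : ℝ), (1 : ℝ)) := by
    rw [pdx_fd (pdt f) (pdt_cd f hf) x t]
    rw [show (fun p : ℝ × ℝ => pdt f p.1 p.2) = fun p => fderiv ℝ F p ((0 : ℝ), (1 : ℝ)) from e2]
    rw [hx2.fderiv]
    rfl
  rw [l1, l2, symm]

lemma pdx_eq_deriv (f : ℝ → ℝ → ℂ) (x t : ℝ) : pdx f x t = deriv (fun u => f u t) x := rfl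
lemma pdt_eq_deriv (f : ℝ → ℝ → ℂ) (x t : ℝ) : pdt f x t = deriv (fun u => f x u) t := rfl

/-- If `(q,r)` solves the ∂NLS system, then `(q, r̂)` with the Miura-type
transformation `r̂ = -(1/2)r_x - q r²` solves the coupled NLS system. -/
theorem miura_dNLS_to_NLS (q r rh : ℝ → ℝ → ℂ)
    (hq : ContDiff ℝ (⊤ : ℕ∞) fun p : ℝ × ℝ => q p.1 p.2)
    (hr : ContDiff ℝ (⊤ : ℕ∞) fun p : ℝ × ℝ => r p.1 p.2)
    (hsys1 : ∀ x t, pdt q x t = (1/2) * pdx (fun a b => pdx q a b) x t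
        - 2 * (q x t)^2 * pdx r x t - 4 * (q x t)^3 * (r x t)^2)
    (hsys2 : ∀ x t, pdt r x t = -(1/2) * pdx (fun a b => pdx r a b) x t
        - 2 * (r x t)^2 * pdx q x t + 4 * (r x t)^3 * (q x t)^2)
    (hrh : ∀ x t, rh x t = -(1/2) * pdx r x t - q x t * (r x t)^2) :
    ∀ x t : ℝ,
      pdt q x t = (1/2) * pdx (fun a b => pdx q a b) x t + 4 * (q x t)^2 * rh x t
      ∧ pdt rh x t = -(1/2) * pdx (fun a b => pdx rh a b) x t
          - 4 * q x t * (rh x t)^2 := by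
  have hqx := pdx_cd q hq
  have hrx := pdx_cd r hr
  have hrxx := pdx_cd (pdx r) hrx
  -- first x-derivative of rh
  have h_rhx : ∀ x t, pdx rh x t = -(1/2) * pdx (pdx r) x t
      - (pdx q x t * (r x t * r x t) + q x t * (2 * r x t * pdx r x t)) := by
    intro x t
    have e : (fun u => rh u t) = fun u => -(1/2 : ℂ) * pdx r u t - q u t * (r u t * r u t) :=
      funext fun u => by rw [hrh]; ring
    have h1 := ((hasX (pdx r) hrx x t).const_mul (-(1/2 : ℂ))).sub
      ((hasX q hq x t).mul ((hasX r hr x t).mul (hasX r hr x t)))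
    rw [pdx_eq_deriv rh x t, e]; refine h1.deriv.trans ?_; simp only [Pi.mul_apply]; ring
  -- second x-derivative of rh
  have h_rhxx : ∀ x t, pdx (pdx rh) x t = -(1/2) * pdx (pdx (pdx r)) x t
      - pdx (pdx q) x t * (r x t * r x t) - 4 * pdx q x t * r x t * pdx r x t
      - 2 * q x t * pdx r x t * pdx r x t - 2 * q x t * r x t * pdx (pdx r) x t := by
    intro x t
    have e : (fun u => pdx rh u t) = fun u => -(1/2 : ℂ) * pdx (pdx r) u t
        - (pdx q u t * (r u t * r u t) + q u t * (2 * r u t * pdx r u t)) :=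
      funext fun u => h_rhx u t
    have h1 := ((hasX (pdx (pdx r)) hrxx x t).const_mul (-(1/2 : ℂ))).sub
      (((hasX (pdx q) hqx x t).mul ((hasX r hr x t).mul (hasX r hr x t))).add
        ((hasX q hq x t).mul (((hasX r hr x t).const_mul (2 : ℂ)).mul (hasX (pdx r) hrx x t))))
    rw [pdx_eq_deriv (pdx rh) x t, e]; refine h1.deriv.trans ?_; simp only [Pi.mul_apply]; ring
  -- t-derivative of rh
  have h_rht : ∀ x t, pdt rh x t = -(1/2) * pdt (pdx r) x t
      - (pdt q x t * (r x t * r x t) + q x t * (2 * r x t * pdt r x t)) := by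
    intro x t
    have e : (fun u => rh x u) = fun u => -(1/2 : ℂ) * pdx r x u - q x u * (r x u * r x u) :=
      funext fun u => by rw [hrh]; ring
    have h1 := ((hasT (pdx r) hrx x t).const_mul (-(1/2 : ℂ))).sub
      ((hasT q hq x t).mul ((hasT r hr x t).mul (hasT r hr x t)))
    rw [pdt_eq_deriv rh x t, e]; refine h1.deriv.trans ?_; simp only [Pi.mul_apply]; ring
  -- x-derivative of pdt r via the system
  have h_ptrx : ∀ x t, pdx (pdt r) x t = -(1/2) * pdx (pdx (pdx r)) x t
      - 4 * r x t * pdx r x t * pdx q x t - 2 * (r x t * r x t) * pdx (pdx q) x t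
      + 12 * (r x t * r x t) * pdx r x t * (q x t * q x t)
      + 8 * (r x t * (r x t * r x t)) * q x t * pdx q x t := by
    intro x t
    have e : (fun u => pdt r u t) = fun u => -(1/2 : ℂ) * pdx (pdx r) u t
        - 2 * ((r u t * r u t) * pdx q u t)
        + 4 * ((r u t * (r u t * r u t)) * (q u t * q u t)) :=
      funext fun u => by rw [hsys2]; ring
    have h1 := (((hasX (pdx (pdx r)) hrxx x t).const_mul (-(1/2 : ℂ))).sub
      ((((hasX r hr x t).mul (hasX r hr x t)).mul (hasX (pdx q) hqx x t)).const_mul (2 : ℂ))).add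
      ((((hasX r hr x t).mul ((hasX r hr x t).mul (hasX r hr x t))).mul
        ((hasX q hq x t).mul (hasX q hq x t))).const_mul (4 : ℂ))
    rw [pdx_eq_deriv (pdt r) x t, e]; refine h1.deriv.trans ?_; simp only [Pi.mul_apply]; ring
  intro x t
  constructor
  · rw [hsys1 x t, hrh x t]; ring
  · rw [show (fun a b => pdx rh a b) = pdx rh from rfl,
      h_rht x t, clairaut r hr x t, h_ptrx x t, hsys1 x t, hsys2 x t, h_rhxx x t, hrh x t,
      show (fun a b => pdx q a b) = pdx q from rfl,
      show (fun a b => pdx r a b) = pdx r from rfl]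
    ring
end

section
/- The transformations s₀: (q(t), r(t)) ↦ (-1/q(-t), q(-t)²r(-t) - (1/2)q_x(-t)) and s₁: (q(t), r(t)) ↦ (q(-t)r(-t)² + (1/2)r_x(-t), -1/r(-t)) each map solutions of the ∂NLS system q_t = (1/2)q_xx - 2q²r_x - 4q³r², r_t = -(1/2)r_xx - 2r²q_x + 4r³q² to solutions of the same system (wherever q, r are nonvanishing). -/
/-- `(q,r)` solves the ∂NLS system
`q_t = (1/2)q_xx - 2q²r_x - 4q³r²`, `r_t = -(1/2)r_xx - 2r²q_x + 4r³q²`. -/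
def SolvesDNLS (q r : ℝ → ℝ → ℂ) : Prop :=
  ∀ x t : ℝ,
    pdt q x t = (1/2) * pdx (fun a b => pdx q a b) x t
      - 2 * (q x t)^2 * pdx r x t - 4 * (q x t)^3 * (r x t)^2
    ∧ pdt r x t = -(1/2) * pdx (fun a b => pdx r a b) x t
      - 2 * (r x t)^2 * pdx q x t + 4 * (r x t)^3 * (q x t)^2

/-- Left Bäcklund transformation `s₀ᴸ` on `q`: `q(t) ↦ -1/q(-t)`. -/
noncomputable def s0q (q : ℝ → ℝ → ℂ) : ℝ → ℝ → ℂ :=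
  fun x t => -(q (-x) (-t))⁻¹

/-- Left Bäcklund transformation `s₀ᴸ` on `r`: `r(t) ↦ q(-t)²r(-t) - (1/2)q_x(-t)`. -/
noncomputable def s0r (q r : ℝ → ℝ → ℂ) : ℝ → ℝ → ℂ :=
  fun x t => (q (-x) (-t))^2 * r (-x) (-t) - (1/2) * pdx q (-x) (-t)

/-- Left Bäcklund transformation `s₁ᴸ` on `q`: `q(t) ↦ q(-t)r(-t)² + (1/2)r_x(-t)`. -/
noncomputable def s1q (q r : ℝ → ℝ → ℂ) : ℝ → ℝ → ℂ :=
  fun x t => q (-x) (-t) * (r (-x) (-t))^2 + (1/2) * pdx r (-x) (-t)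

/-- Left Bäcklund transformation `s₁ᴸ` on `r`: `r(t) ↦ -1/r(-t)`. -/
noncomputable def s1r (r : ℝ → ℝ → ℂ) : ℝ → ℝ → ℂ :=
  fun x t => -(r (-x) (-t))⁻¹

/-! ### Auxiliary infrastructure -/

private def Csm (f : ℝ → ℝ → ℂ) : Prop := ContDiff ℝ (⊤ : ℕ∞) fun p : ℝ × ℝ => f p.1 p.2

private lemma hasDerivAt_pdx {f : ℝ → ℝ → ℂ} (hf : Csm f) (x t : ℝ) :
    HasDerivAt (fun u => f u t) (pdx f x t) x := by
  have h1 := (hf.differentiable (by simp)).differentiableAt (x := (x, t))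
  have h2 : DifferentiableAt ℝ (fun u : ℝ => ((u, t) : ℝ × ℝ)) x :=
    differentiableAt_id.prodMk (differentiableAt_const t)
  exact (h1.comp x h2).hasDerivAt

private lemma hasDerivAt_pdt {f : ℝ → ℝ → ℂ} (hf : Csm f) (x t : ℝ) :
    HasDerivAt (fun u => f x u) (pdt f x t) t := by
  have h1 := (hf.differentiable (by simp)).differentiableAt (x := (x, t))
  have h2 : DifferentiableAt ℝ (fun u : ℝ => ((x, u) : ℝ × ℝ)) t :=
    (differentiableAt_const x).prodMk differentiableAt_id
  exact (h1.comp t h2).hasDerivAt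

private lemma pdx_eq_fderiv {f : ℝ → ℝ → ℂ} (hf : Csm f) (x t : ℝ) :
    pdx f x t = fderiv ℝ (fun p : ℝ × ℝ => f p.1 p.2) (x, t) (1, 0) := by
  have h1 : HasFDerivAt (fun p : ℝ × ℝ => f p.1 p.2)
      (fderiv ℝ (fun p : ℝ × ℝ => f p.1 p.2) (x, t)) (x, t) :=
    ((hf.differentiable (by simp)) (x, t)).hasFDerivAt
  have h2 : HasDerivAt (fun u : ℝ => ((u, t) : ℝ × ℝ)) (1, 0) x :=
    (hasDerivAt_id x).prodMk (hasDerivAt_const x t)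
  exact (h1.comp_hasDerivAt x h2).deriv

private lemma pdt_eq_fderiv {f : ℝ → ℝ → ℂ} (hf : Csm f) (x t : ℝ) :
    pdt f x t = fderiv ℝ (fun p : ℝ × ℝ => f p.1 p.2) (x, t) (0, 1) := by
  have h1 : HasFDerivAt (fun p : ℝ × ℝ => f p.1 p.2)
      (fderiv ℝ (fun p : ℝ × ℝ => f p.1 p.2) (x, t)) (x, t) :=
    ((hf.differentiable (by simp)) (x, t)).hasFDerivAt
  have h2 : HasDerivAt (fun u : ℝ => ((x, u) : ℝ × ℝ)) (0, 1) t :=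
    (hasDerivAt_const t x).prodMk (hasDerivAt_id t)
  exact (h1.comp_hasDerivAt t h2).deriv

private lemma contDiff_pdx {f : ℝ → ℝ → ℂ} (hf : Csm f) : Csm (pdx f) := by
  have h : (fun p : ℝ × ℝ => pdx f p.1 p.2)
      = fun p : ℝ × ℝ => fderiv ℝ (fun p : ℝ × ℝ => f p.1 p.2) p (1, 0) := by
    funext p
    rw [show p = (p.1, p.2) from rfl]
    exact pdx_eq_fderiv hf p.1 p.2
  rw [Csm, h]
  exact (hf.fderiv_right (by simp)).clm_apply contDiff_const

private lemma contDiff_pdt {f : ℝ → ℝ → ℂ} (hf : Csm f) : Csm (pdt f) := by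
  have h : (fun p : ℝ × ℝ => pdt f p.1 p.2)
      = fun p : ℝ × ℝ => fderiv ℝ (fun p : ℝ × ℝ => f p.1 p.2) p (0, 1) := by
    funext p
    rw [show p = (p.1, p.2) from rfl]
    exact pdt_eq_fderiv hf p.1 p.2
  rw [Csm, h]
  exact (hf.fderiv_right (by simp)).clm_apply contDiff_const

private lemma pdt_pdx_comm {f : ℝ → ℝ → ℂ} (hf : Csm f) (x t : ℝ) :
    pdt (pdx f) x t = pdx (pdt f) x t := by
  set F := fun p : ℝ × ℝ => f p.1 p.2 with hF
  have hA : ContDiff ℝ (⊤ : ℕ∞) (fderiv ℝ F) := hf.fderiv_right (by simp)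
  have hAd : HasFDerivAt (fderiv ℝ F) (fderiv ℝ (fderiv ℝ F) (x, t)) (x, t) :=
    ((hA.differentiable (by simp)) (x, t)).hasFDerivAt
  have hsym := second_derivative_symmetric
    (fun y => ((hf.differentiable (by simp)) y).hasFDerivAt) hAd
  have e1 : (fun p : ℝ × ℝ => pdx f p.1 p.2) = fun p => fderiv ℝ F p (1, 0) := by
    funext p; rw [show p = (p.1, p.2) from rfl]; exact pdx_eq_fderiv hf p.1 p.2
  have e2 : (fun p : ℝ × ℝ => pdt f p.1 p.2) = fun p => fderiv ℝ F p (0, 1) := by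
    funext p; rw [show p = (p.1, p.2) from rfl]; exact pdt_eq_fderiv hf p.1 p.2
  have d1 : HasFDerivAt (fun p => fderiv ℝ F p ((1 : ℝ), (0 : ℝ)))
      ((ContinuousLinearMap.apply ℝ ℂ ((1 : ℝ), (0 : ℝ))).comp
        (fderiv ℝ (fderiv ℝ F) (x, t))) (x, t) :=
    (ContinuousLinearMap.apply ℝ ℂ ((1 : ℝ), (0 : ℝ))).hasFDerivAt.comp (x, t) hAd
  have d2 : HasFDerivAt (fun p => fderiv ℝ F p ((0 : ℝ), (1 : ℝ)))
      ((ContinuousLinearMap.apply ℝ ℂ ((0 : ℝ), (1 : ℝ))).comp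
        (fderiv ℝ (fderiv ℝ F) (x, t))) (x, t) :=
    (ContinuousLinearMap.apply ℝ ℂ ((0 : ℝ), (1 : ℝ))).hasFDerivAt.comp (x, t) hAd
  have L : pdt (pdx f) x t = (fderiv ℝ (fderiv ℝ F) (x, t) (0, 1)) (1, 0) := by
    rw [pdt_eq_fderiv (contDiff_pdx hf) x t, e1, d1.fderiv]; rfl
  have R : pdx (pdt f) x t = (fderiv ℝ (fderiv ℝ F) (x, t) (1, 0)) (0, 1) := by
    rw [pdx_eq_fderiv (contDiff_pdt hf) x t, e2, d2.fderiv]; rfl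
  rw [L, R, hsym (0, 1) (1, 0)]

private lemma RX {f : ℝ → ℝ → ℂ} (hf : Csm f) (x t : ℝ) :
    HasDerivAt (fun u => f (-u) (-t)) (-pdx f (-x) (-t)) x := by
  have h := HasDerivAt.scomp (g₁ := fun u => f u (-t)) x
    (hasDerivAt_pdx hf (-x) (-t)) (hasDerivAt_neg x)
  simpa [Function.comp_def] using h

private lemma RT {f : ℝ → ℝ → ℂ} (hf : Csm f) (x t : ℝ) :
    HasDerivAt (fun u => f (-x) (-u)) (-pdt f (-x) (-t)) t := by
  have h := HasDerivAt.scomp (g₁ := fun u => f (-x) u) t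
    (hasDerivAt_pdt hf (-x) (-t)) (hasDerivAt_neg t)
  simpa [Function.comp_def] using h

private lemma HasDerivAt.cinv {c : ℝ → ℂ} {c' : ℂ} {x : ℝ} (hc : HasDerivAt c c' x)
    (hne : c x ≠ 0) : HasDerivAt (fun y => (c y)⁻¹) (-c' / c x ^ 2) x := by
  have h := (hasDerivAt_const x (1 : ℂ)).div hc hne
  have e : (0 * c x - 1 * c') / c x ^ 2 = -c' / c x ^ 2 := by ring
  rw [e] at h
  have e2 : ((fun _ => (1 : ℂ)) / c) = fun y => (c y)⁻¹ := by funext y; simp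
  rw [e2] at h
  exact h


private lemma HasDerivAt.cpow2 {c : ℝ → ℂ} {c' : ℂ} {x : ℝ} (h : HasDerivAt c c' x) :
    HasDerivAt (fun y => (c y) ^ 2) (2 * c x * c') x := by
  have h2 := h.mul h
  have e : (c * c) = fun y => (c y) ^ 2 := by funext y; simp only [Pi.mul_apply]; ring
  rw [e] at h2
  exact h2.congr_deriv (by ring)

private lemma HasDerivAt.cpow3 {c : ℝ → ℂ} {c' : ℂ} {x : ℝ} (h : HasDerivAt c c' x) :
    HasDerivAt (fun y => (c y) ^ 3) (3 * c x ^ 2 * c') x := by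
  have h3 := h.cpow2.mul h
  have e : ((fun y => c y ^ 2) * c) = fun y => (c y) ^ 3 := by funext y; simp only [Pi.mul_apply]; ring
  rw [e] at h3
  exact h3.congr_deriv (by ring)

/-! ### Unconditional reflection identities -/

private lemma pdx_refl (f : ℝ → ℝ → ℂ) (x t : ℝ) :
    pdx (fun a b => f (-a) (-b)) x t = -pdx f (-x) (-t) :=
  deriv_comp_neg (f := fun u => f u (-t)) x

private lemma pdt_refl (f : ℝ → ℝ → ℂ) (x t : ℝ) :
    pdt (fun a b => f (-a) (-b)) x t = -pdt f (-x) (-t) :=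
  deriv_comp_neg (f := fun u => f (-x) u) t

private lemma pdxx_refl (f : ℝ → ℝ → ℂ) (x t : ℝ) :
    pdx (fun a b => pdx (fun c d => f (-c) (-d)) a b) x t
      = pdx (fun a b => pdx f a b) (-x) (-t) := by
  show deriv (fun u => pdx (fun c d => f (-c) (-d)) u t) x = _
  have e : (fun u => pdx (fun c d => f (-c) (-d)) u t) = fun u => -pdx f (-u) (-t) := by
    funext u; exact pdx_refl f u t
  rw [e, deriv.fun_neg]
  have h2 : deriv (fun u => pdx f (-u) (-t)) x = -pdx (pdx f) (-x) (-t) :=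
    deriv_comp_neg (f := fun v => pdx f v (-t)) x
  rw [h2, neg_neg]

/-- Reflect `(x,t) ↦ (-x,-t)` and swap the roles of `q` and `r`: this maps solutions
to solutions. -/
private lemma swapRefl {q r : ℝ → ℝ → ℂ} (hsol : SolvesDNLS q r) :
    SolvesDNLS (fun a b => r (-a) (-b)) (fun a b => q (-a) (-b)) := by
  intro x t
  constructor
  · have h := (hsol (-x) (-t)).2
    simp only [pdt_refl r, pdxx_refl r, pdx_refl q]
    rw [h]; ring
  · have h := (hsol (-x) (-t)).1
    simp only [pdt_refl q, pdxx_refl q, pdx_refl r]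
    rw [h]; ring


private lemma alg1 (a b q1 q11 r1 : ℂ) (ha : a ≠ 0) :
    -(1/2*q11 - 2*a^2*r1 - 4*a^3*b^2)/a^2
      = 1/2 * (q11/a^2 - 2*q1^2/a^3)
        - 2*(-(a)⁻¹)^2 * (-(2*a*q1*b + a^2*r1 - 1/2*q11))
        - 4*(-(a)⁻¹)^3 * (a^2*b - 1/2*q1)^2 := by
  have hI : a * a⁻¹ = 1 := mul_inv_cancel₀ ha
  linear_combination (4*a*a⁻¹^2*b*q1 - 4*a^3*a⁻¹^2*b^2) * hI

private lemma alg2 (a b q1 q11 q111 r1 r11 : ℂ) (ha : a ≠ 0) :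
    -(2*a*(1/2*q11 - 2*a^2*r1 - 4*a^3*b^2)*b
      + a^2*(-(1/2)*r11 - 2*b^2*q1 + 4*b^3*a^2)
      - 1/2*(1/2*q111 - (4*a*q1*r1 + 2*a^2*r11 + 12*a^2*q1*b^2 + 8*a^3*b*r1)))
    = -(1/2) * (2*q1^2*b + 2*a*q11*b + 4*a*q1*r1 + a^2*r11 - 1/2*q111)
      - 2*(a^2*b - 1/2*q1)^2 * (-q1/a^2)
      + 4*(a^2*b - 1/2*q1)^3 * (-(a)⁻¹)^2 := by
  have hI : a * a⁻¹ = 1 := mul_inv_cancel₀ ha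
  linear_combination (-b*q1^2 - a*a⁻¹*b*q1^2 + 4*a^2*b^2*q1 + 4*a^3*a⁻¹*b^2*q1
    - 4*a^4*b^3 - 4*a^5*a⁻¹*b^3) * hI

/-! ### The main computation: `s₀` preserves solutions -/

private lemma s0_solves (q r : ℝ → ℝ → ℂ) (hq : Csm q) (hr : Csm r)
    (hsol : SolvesDNLS q r) (hqne : ∀ x t, q x t ≠ 0) :
    SolvesDNLS (s0q q) (s0r q r) := by
  have hq1 : Csm (pdx q) := contDiff_pdx hq
  have hq11 : Csm (pdx (pdx q)) := contDiff_pdx hq1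
  have hr1 : Csm (pdx r) := contDiff_pdx hr
  -- first x-derivatives, as identities valid at every point
  have hux : ∀ a b : ℝ, pdx (s0q q) a b = -pdx q (-a) (-b) / q (-a) (-b) ^ 2 := by
    intro a b
    have H : HasDerivAt (fun u => -(q (-u) (-b))⁻¹)
        (-pdx q (-a) (-b) / q (-a) (-b) ^ 2) a := by
      have H0 := ((RX hq a b).cinv (hqne (-a) (-b))).neg
      exact H0.congr_deriv (by ring)
    exact H.deriv
  have hvx : ∀ a b : ℝ, pdx (s0r q r) a b
      = -(2 * q (-a) (-b) * pdx q (-a) (-b) * r (-a) (-b)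
          + q (-a) (-b) ^ 2 * pdx r (-a) (-b) - 1/2 * pdx (pdx q) (-a) (-b)) := by
    intro a b
    have H : HasDerivAt (fun u => (q (-u) (-b))^2 * r (-u) (-b) - (1/2) * pdx q (-u) (-b))
        (-(2 * q (-a) (-b) * pdx q (-a) (-b) * r (-a) (-b)
          + q (-a) (-b) ^ 2 * pdx r (-a) (-b) - 1/2 * pdx (pdx q) (-a) (-b))) a := by
      have H0 := (((RX hq a b).cpow2).mul (RX hr a b)).sub
        ((RX hq1 a b).const_mul ((1 : ℂ)/2))
      exact H0.congr_deriv (by ring)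
    exact H.deriv
  intro x t
  have ha : q (-x) (-t) ≠ 0 := hqne (-x) (-t)
  have E1 : pdt q (-x) (-t) = 1/2 * pdx (pdx q) (-x) (-t)
      - 2 * q (-x) (-t) ^ 2 * pdx r (-x) (-t)
      - 4 * q (-x) (-t) ^ 3 * r (-x) (-t) ^ 2 := (hsol (-x) (-t)).1
  have E2 : pdt r (-x) (-t) = -(1/2) * pdx (pdx r) (-x) (-t)
      - 2 * r (-x) (-t) ^ 2 * pdx q (-x) (-t)
      + 4 * r (-x) (-t) ^ 3 * q (-x) (-t) ^ 2 := (hsol (-x) (-t)).2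
  -- t-derivatives of the transformed pair
  have hut : pdt (s0q q) x t = -pdt q (-x) (-t) / q (-x) (-t) ^ 2 := by
    have H : HasDerivAt (fun u => -(q (-x) (-u))⁻¹)
        (-pdt q (-x) (-t) / q (-x) (-t) ^ 2) t := by
      have H0 := ((RT hq x t).cinv ha).neg
      exact H0.congr_deriv (by ring)
    exact H.deriv
  have hvt : pdt (s0r q r) x t
      = -(2 * q (-x) (-t) * pdt q (-x) (-t) * r (-x) (-t)
          + q (-x) (-t) ^ 2 * pdt r (-x) (-t) - 1/2 * pdt (pdx q) (-x) (-t)) := by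
    have H : HasDerivAt (fun u => (q (-x) (-u))^2 * r (-x) (-u) - (1/2) * pdx q (-x) (-u))
        (-(2 * q (-x) (-t) * pdt q (-x) (-t) * r (-x) (-t)
          + q (-x) (-t) ^ 2 * pdt r (-x) (-t) - 1/2 * pdt (pdx q) (-x) (-t))) t := by
      have H0 := (((RT hq x t).cpow2).mul (RT hr x t)).sub
        ((RT hq1 x t).const_mul ((1 : ℂ)/2))
      exact H0.congr_deriv (by ring)
    exact H.deriv
  -- second x-derivatives of the transformed pair
  have huxx : pdx (fun a b => pdx (s0q q) a b) x t
      = pdx (pdx q) (-x) (-t) / q (-x) (-t) ^ 2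
        - 2 * pdx q (-x) (-t) ^ 2 / q (-x) (-t) ^ 3 := by
    show deriv (fun u => pdx (s0q q) u t) x = _
    have e : (fun u => pdx (s0q q) u t) = fun u => -pdx q (-u) (-t) / q (-u) (-t) ^ 2 := by
      funext u; exact hux u t
    rw [e]
    have H : HasDerivAt (fun u => -pdx q (-u) (-t) / q (-u) (-t) ^ 2)
        (pdx (pdx q) (-x) (-t) / q (-x) (-t) ^ 2
          - 2 * pdx q (-x) (-t) ^ 2 / q (-x) (-t) ^ 3) x := by
      have H0 := ((RX hq1 x t).neg.div ((RX hq x t).cpow2) (pow_ne_zero 2 ha))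
      refine H0.congr_deriv ?_
      simp only [Pi.neg_apply]
      field_simp
    exact H.deriv
  have hvxx : pdx (fun a b => pdx (s0r q r) a b) x t
      = 2 * pdx q (-x) (-t) ^ 2 * r (-x) (-t)
        + 2 * q (-x) (-t) * pdx (pdx q) (-x) (-t) * r (-x) (-t)
        + 4 * q (-x) (-t) * pdx q (-x) (-t) * pdx r (-x) (-t)
        + q (-x) (-t) ^ 2 * pdx (pdx r) (-x) (-t)
        - 1/2 * pdx (pdx (pdx q)) (-x) (-t) := by
    show deriv (fun u => pdx (s0r q r) u t) x = _
    have e : (fun u => pdx (s0r q r) u t)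
        = fun u => -(2 * q (-u) (-t) * pdx q (-u) (-t) * r (-u) (-t)
          + q (-u) (-t) ^ 2 * pdx r (-u) (-t) - 1/2 * pdx (pdx q) (-u) (-t)) := by
      funext u; exact hvx u t
    rw [e]
    have H : HasDerivAt (fun u => -(2 * q (-u) (-t) * pdx q (-u) (-t) * r (-u) (-t)
          + q (-u) (-t) ^ 2 * pdx r (-u) (-t) - 1/2 * pdx (pdx q) (-u) (-t)))
        (2 * pdx q (-x) (-t) ^ 2 * r (-x) (-t)
          + 2 * q (-x) (-t) * pdx (pdx q) (-x) (-t) * r (-x) (-t)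
          + 4 * q (-x) (-t) * pdx q (-x) (-t) * pdx r (-x) (-t)
          + q (-x) (-t) ^ 2 * pdx (pdx r) (-x) (-t)
          - 1/2 * pdx (pdx (pdx q)) (-x) (-t)) x := by
      have H0 := (((((RX hq x t).const_mul 2).mul (RX hq1 x t)).mul (RX hr x t)).add
        (((RX hq x t).cpow2).mul (RX hr1 x t))).sub
        ((RX hq11 x t).const_mul ((1 : ℂ)/2)) |>.neg
      exact H0.congr_deriv (by simp only [Pi.mul_apply]; ring)
    exact H.deriv
  -- the x-derivative of the first PDE (to express the mixed partial)
  have hE1x : pdx (pdt q) (-x) (-t)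
      = 1/2 * pdx (pdx (pdx q)) (-x) (-t)
        - (4 * q (-x) (-t) * pdx q (-x) (-t) * pdx r (-x) (-t)
          + 2 * q (-x) (-t) ^ 2 * pdx (pdx r) (-x) (-t)
          + 12 * q (-x) (-t) ^ 2 * pdx q (-x) (-t) * r (-x) (-t) ^ 2
          + 8 * q (-x) (-t) ^ 3 * r (-x) (-t) * pdx r (-x) (-t)) := by
    show deriv (fun u => pdt q u (-t)) (-x) = _
    have e : (fun u => pdt q u (-t))
        = fun u => 1/2 * pdx (pdx q) u (-t) - 2 * (q u (-t))^2 * pdx r u (-t)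
            - 4 * (q u (-t))^3 * (r u (-t))^2 := by
      funext u; exact (hsol u (-t)).1
    rw [e]
    have H : HasDerivAt (fun u : ℝ => 1/2 * pdx (pdx q) u (-t)
          - 2 * (q u (-t))^2 * pdx r u (-t) - 4 * (q u (-t))^3 * (r u (-t))^2)
        (1/2 * pdx (pdx (pdx q)) (-x) (-t)
          - (4 * q (-x) (-t) * pdx q (-x) (-t) * pdx r (-x) (-t)
            + 2 * q (-x) (-t) ^ 2 * pdx (pdx r) (-x) (-t)
            + 12 * q (-x) (-t) ^ 2 * pdx q (-x) (-t) * r (-x) (-t) ^ 2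
            + 8 * q (-x) (-t) ^ 3 * r (-x) (-t) * pdx r (-x) (-t))) (-x) := by
      have H0 := (((hasDerivAt_pdx hq11 (-x) (-t)).const_mul ((1 : ℂ)/2)).sub
        ((((hasDerivAt_pdx hq (-x) (-t)).cpow2).const_mul 2).mul
          (hasDerivAt_pdx hr1 (-x) (-t)))).sub
        ((((hasDerivAt_pdx hq (-x) (-t)).cpow3).const_mul 4).mul
          ((hasDerivAt_pdx hr (-x) (-t)).cpow2))
      exact H0.congr_deriv (by ring)
    exact H.deriv
  constructor
  · rw [hut, huxx, hvx x t]
    simp only [s0q, s0r]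
    rw [E1]
    exact alg1 (q (-x) (-t)) (r (-x) (-t)) (pdx q (-x) (-t)) (pdx (pdx q) (-x) (-t))
      (pdx r (-x) (-t)) ha
  · rw [hvt, hvxx, hux x t]
    simp only [s0q, s0r]
    rw [pdt_pdx_comm hq (-x) (-t), hE1x, E1, E2]
    exact alg2 (q (-x) (-t)) (r (-x) (-t)) (pdx q (-x) (-t)) (pdx (pdx q) (-x) (-t))
      (pdx (pdx (pdx q)) (-x) (-t)) (pdx r (-x) (-t)) (pdx (pdx r) (-x) (-t)) ha

/-- The left-action affine Weyl group transformations `s₀ᴸ`, `s₁ᴸ` map solutions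
of the ∂NLS system to solutions, wherever `q`, `r` are nonvanishing. -/
theorem left_Weyl_action_preserves_dNLS (q r : ℝ → ℝ → ℂ)
    (hq : ContDiff ℝ (⊤ : ℕ∞) fun p : ℝ × ℝ => q p.1 p.2)
    (hr : ContDiff ℝ (⊤ : ℕ∞) fun p : ℝ × ℝ => r p.1 p.2)
    (hsol : SolvesDNLS q r)
    (hqne : ∀ x t, q x t ≠ 0) (hrne : ∀ x t, r x t ≠ 0) :
    SolvesDNLS (s0q q) (s0r q r) ∧ SolvesDNLS (s1q q r) (s1r r) := by
  refine ⟨s0_solves q r hq hr hsol hqne, ?_⟩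
  have hQ : Csm (fun a b => r (-a) (-b)) := by
    show ContDiff ℝ (⊤ : ℕ∞) fun p : ℝ × ℝ => r (-p.1) (-p.2)
    exact hr.comp (contDiff_id.neg)
  have hR : Csm (fun a b => q (-a) (-b)) := by
    show ContDiff ℝ (⊤ : ℕ∞) fun p : ℝ × ℝ => q (-p.1) (-p.2)
    exact hq.comp (contDiff_id.neg)
  have h2 := s0_solves _ _ hQ hR (swapRefl hsol) (fun x t => hrne (-x) (-t))
  have h3 := swapRefl h2
  have e1 : (fun a b => s0r (fun a b => r (-a) (-b)) (fun a b => q (-a) (-b)) (-a) (-b))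
      = s1q q r := by
    funext a b
    simp only [s0r, s1q, neg_neg]
    rw [pdx_refl r]
    ring
  have e2 : (fun a b => s0q (fun a b => r (-a) (-b)) (-a) (-b)) = s1r r := by
    funext a b
    simp only [s0q, s1r, neg_neg]
  rw [← e1, ← e2]
  exact h3
end

section
/- Under the same hypotheses (the system φ' = -φ(ψ₁ + ψ₀), ψ₁' = ψ₁(2φ + ψ₁ + 2x) - 4β, ψ₀' = ψ₀(-2φ + ψ₀ - 2x) - 2(2β-1), with ψ₀ - ψ₁ - φ + 2(α+β)/φ = 2x), the function y = ψ₁ satisfies the fourth Painlevé equation y'' = (y')²/(2y) + (3/2)y³ + 4xy² + 2(x² - ν₁)y + ν₂/y with ν₁ = -2α - 1 and ν₂ = -8β², provided ψ₁ is nonvanishing. -/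
/-!
Differentiating `ψ₁' = ψ₁(2φ + ψ₁ + 2x) - 4β` once more expresses `ψ₁''` through `φ'`, `ψ₁'`
and `φ, ψ₁, x`. The first equation together with the constraint gives
`φ' = -φ(2ψ₁ + φ + 2x) + 2(α + β)`, so `ψ₀` disappears, and the remaining dependence on `φ`
cancels against `(ψ₁')²/(2ψ₁)` and `-8β²/ψ₁` after substituting `ψ₁'` back, leaving P-IV.
-/

theorem painleveIV_of_reduction {K : Type*} [Field K] [CharZero K]
    (α β x φ y ψ dφ dy : K) (hφ : φ ≠ 0) (hy : y ≠ 0)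
    (hdφ : dφ = -φ * (y + ψ)) (hdy : dy = y * (2 * φ + y + 2 * x) - 4 * β)
    (hψ : ψ - y - φ + 2 * (α + β) / φ = 2 * x) :
    dy * (2 * φ + y + 2 * x) + y * (2 * dφ + dy + 2) =
      dy ^ 2 / (2 * y) + 3 / 2 * y ^ 3 + 4 * x * y ^ 2
        + 2 * (x ^ 2 - (-2 * α - 1)) * y + -8 * β ^ 2 / y := by
  have hψ' : ψ = 2 * x + y + φ - 2 * (α + β) / φ := by linear_combination hψ
  subst hdφ hdy hψ'
  field_simp
  ring

theorem hasDerivAt_psi1_rhs {φ ψ : ℝ → ℂ} {x : ℝ} (c : ℂ)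
    (hφ : DifferentiableAt ℝ φ x) (hψ : DifferentiableAt ℝ ψ x) :
    HasDerivAt (fun t : ℝ => ψ t * (2 * φ t + ψ t + 2 * (t : ℂ)) - c)
      (deriv ψ x * (2 * φ x + ψ x + 2 * (x : ℂ)) + ψ x * (2 * deriv φ x + deriv ψ x + 2)) x := by
  have hid : HasDerivAt (fun t : ℝ => (t : ℂ)) 1 x := by
    simpa using (hasDerivAt_id x).ofReal_comp
  simpa using (hψ.hasDerivAt.mul (((hφ.hasDerivAt.const_mul 2).add hψ.hasDerivAt).add
    (hid.const_mul 2))).sub_const c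

theorem psi1_solves_PIV_general (α β : ℂ) (φ ψ1 ψ0 : ℝ → ℂ)
    (hφ : Differentiable ℝ φ) (hψ1 : Differentiable ℝ ψ1)
    (hφne : ∀ x, φ x ≠ 0) (hψ1ne : ∀ x, ψ1 x ≠ 0)
    (e1 : ∀ x : ℝ, deriv φ x = -φ x * (ψ1 x + ψ0 x))
    (e2 : ∀ x : ℝ, deriv ψ1 x = ψ1 x * (2 * φ x + ψ1 x + 2 * (x : ℂ)) - 4 * β)
    (e4 : ∀ x : ℝ, ψ0 x - ψ1 x - φ x + 2 * (α + β) / φ x = 2 * (x : ℂ)) :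
    ∀ x : ℝ,
      deriv (deriv ψ1) x =
        (deriv ψ1 x)^2 / (2 * ψ1 x) + (3/2) * (ψ1 x)^3 + 4 * (x : ℂ) * (ψ1 x)^2
          + 2 * ((x : ℂ)^2 - (-2 * α - 1)) * ψ1 x + (-8 * β^2) / ψ1 x := by
  intro x
  have hsecond : HasDerivAt (deriv ψ1)
      (deriv ψ1 x * (2 * φ x + ψ1 x + 2 * (x : ℂ)) + ψ1 x * (2 * deriv φ x + deriv ψ1 x + 2)) x := by
    have h := hasDerivAt_psi1_rhs (4 * β) (hφ x) (hψ1 x)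
    rwa [← funext e2] at h
  rw [hsecond.deriv]
  exact painleveIV_of_reduction α β x (φ x) (ψ1 x) (ψ0 x) (deriv φ x) (deriv ψ1 x)
    (hφne x) (hψ1ne x) (e1 x) (e2 x) (e4 x)

/-- Similarity reduction of the ∂NLS hierarchy: under the system
`φ' = -φ(ψ₁+ψ₀)`, `ψ₁' = ψ₁(2φ+ψ₁+2x) - 4β`, `ψ₀' = ψ₀(-2φ+ψ₀-2x) - 2(2β-1)`
with the constraint `ψ₀ - ψ₁ - φ + 2(α+β)/φ = 2x`, the function `y = ψ₁`
satisfies the fourth Painlevé equation with `ν₁ = -2α - 1`,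
`ν₂ = -8β²`, provided `ψ₁` is nonvanishing. -/
theorem psi1_solves_PIV (α β : ℂ) (φ ψ1 ψ0 : ℝ → ℂ)
    (hφ : Differentiable ℝ φ) (hψ1 : Differentiable ℝ ψ1)
    (hψ0 : Differentiable ℝ ψ0)
    (hφne : ∀ x, φ x ≠ 0) (hψ1ne : ∀ x, ψ1 x ≠ 0)
    (e1 : ∀ x : ℝ, deriv φ x = -φ x * (ψ1 x + ψ0 x))
    (e2 : ∀ x : ℝ, deriv ψ1 x = ψ1 x * (2 * φ x + ψ1 x + 2 * (x : ℂ)) - 4 * β)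
    (e3 : ∀ x : ℝ, deriv ψ0 x = ψ0 x * (-2 * φ x + ψ0 x - 2 * (x : ℂ))
        - 2 * (2 * β - 1))
    (e4 : ∀ x : ℝ, ψ0 x - ψ1 x - φ x + 2 * (α + β) / φ x = 2 * (x : ℂ)) :
    ∀ x : ℝ,
      deriv (deriv ψ1) x =
        (deriv ψ1 x)^2 / (2 * ψ1 x) + (3/2) * (ψ1 x)^3 + 4 * (x : ℂ) * (ψ1 x)^2
          + 2 * ((x : ℂ)^2 - (-2 * α - 1)) * ψ1 x + (-8 * β^2) / ψ1 x :=
  psi1_solves_PIV_general α β φ ψ1 ψ0 hφ hψ1 hφne hψ1ne e1 e2 e4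
end
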